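/- arXiv:math-ph/0212025 — 3 statements merged into one kernel-verified Lean document; each statement's English description precedes it below -/
import Mathlib

section
/- Let γ: (-2ε,2ε) → E be continuous and let δ ∈ (0,ε]. Then: (i) the variable-scale mollification γ_δ is continuous on (-ε,ε); (ii) γ_δ(s) = γ(s) for every s ∈ (-ε,ε) with |s| > δ/2; (iii) for every s ∈ (-ε,ε), ‖γ_δ(s) − γ(s)‖ ≤ sup{‖γ(u) − γ(s)‖ : u ∈ (-2ε,2ε), |u − s| ≤ δ²/100}. In particular, γ_δ converges to γ uniformly on (-ε,ε) as δ → 0. -/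
open MeasureTheory Set

/-- The variable mollification scale `σ_δ(t) = δ² σ(t/δ)`. -/
noncomputable def sigmaDel (σ : ℝ → ℝ) (δ t : ℝ) : ℝ := δ ^ 2 * σ (t / δ)

/-- The variable-scale mollification `γ_δ(s) = ∫ γ(s - σ_δ(s) t) φ(t) dt` (Bochner integral). -/
noncomputable def mollify {E : Type*} [NormedAddCommGroup E] [NormedSpace ℝ E]
    (φ σ : ℝ → ℝ) (δ : ℝ) (γ : ℝ → E) (s : ℝ) : E :=
  ∫ t : ℝ, φ t • γ (s - sigmaDel σ δ s * t)

/-!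
Since `0 ≤ σ_δ ≤ δ²/100` and `φ` is a probability density on `[-1, 1]`, `γ_δ(s)` is an average of
`γ` over points within `δ²/100` of `s`, all of them in `(-2ε, 2ε)`; this gives the error bound, and
`σ_δ(s) = 0` for `|s| > δ/2` gives `γ_δ(s) = γ(s)` there. The integrand is jointly continuous in
`(s, t)` and vanishes for `t ∉ [-1, 1]`, so continuity of `γ_δ` is continuity of a parametric
integral with uniformly compact support.
-/

section

variable {E : Type*} [NormedAddCommGroup E] {φ σ : ℝ → ℝ} {γ : ℝ → E} {ε δ s : ℝ}

open Filter Topology in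
theorem continuousOn_smul_of_tsupport_subset {X Y R M : Type*} [TopologicalSpace X]
    [TopologicalSpace Y] [TopologicalSpace R] [TopologicalSpace M] [Zero R] [Zero M]
    [SMulWithZero R M] [ContinuousSMul R M] {φ : Y → R} {g : X × Y → M} {U : Set X} {V : Set Y}
    (hφ : Continuous φ) (hV : IsOpen V) (hφV : tsupport φ ⊆ V) (hg : ContinuousOn g (U ×ˢ V)) :
    ContinuousOn (fun p => φ p.2 • g p) (U ×ˢ univ) := by
  rintro ⟨x, y⟩ ⟨hx, -⟩
  by_cases hy : y ∈ V
  · have hUV : U ×ˢ V ∈ 𝓝[U ×ˢ univ] (x, y) :=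
      mem_nhdsWithin.mpr
        ⟨univ ×ˢ V, isOpen_univ.prod hV, ⟨trivial, hy⟩, fun p hp => ⟨hp.2.1, hp.1.2⟩⟩
    exact ((hφ.comp continuous_snd).continuousWithinAt.smul (hg _ ⟨hx, hy⟩)).mono_of_mem_nhdsWithin
      hUV
  · have hφ0 : φ =ᶠ[𝓝 y] 0 := notMem_tsupport_iff_eventuallyEq.mp (fun h => hy (hφV h))
    refine (continuousAt_const (y := (0 : M)).congr ?_).continuousWithinAt
    filter_upwards [continuous_snd.continuousAt.eventually hφ0] with p hp
    simp [hp]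

theorem bddAbove_image_norm_sub {U : Set ℝ} (hγ : ContinuousOn γ U) {r : ℝ}
    (hsub : Icc (s - r) (s + r) ⊆ U) :
    BddAbove ((fun u => ‖γ u - γ s‖) '' {u | u ∈ U ∧ |u - s| ≤ r}) := by
  refine ((isCompact_Icc.image_of_continuousOn
    ((hγ.mono hsub).sub continuousOn_const).norm).bddAbove).mono (image_mono ?_)
  intro u hu
  have := abs_le.mp hu.2
  constructor <;> linarith

variable [NormedSpace ℝ E]

theorem norm_integral_smul_le {α : Type*} [MeasurableSpace α] {μ : Measure α} {φ : α → ℝ}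
    {f : α → E} {M : ℝ} (hφ0 : ∀ t, 0 ≤ φ t) (hφint : ∫ t, φ t ∂μ = 1)
    (hf : ∀ t, φ t ≠ 0 → ‖f t‖ ≤ M) : ‖∫ t, φ t • f t ∂μ‖ ≤ M := by
  have hφI : Integrable φ μ := Integrable.of_integral_ne_zero (by simp [hφint])
  calc ‖∫ t, φ t • f t ∂μ‖ ≤ ∫ t, φ t * M ∂μ := by
        refine norm_integral_le_of_norm_le (hφI.mul_const M) (.of_forall fun t => ?_)
        rcases eq_or_ne (φ t) 0 with h | h
        · simp [h]
        · rw [norm_smul, Real.norm_of_nonneg (hφ0 t)]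
          exact mul_le_mul_of_nonneg_left (hf t h) (hφ0 t)
    _ = M := by rw [integral_mul_const, hφint, one_mul]

theorem sigmaDel_nonneg (hσ0 : ∀ t, 0 ≤ σ t) (δ s : ℝ) : 0 ≤ sigmaDel σ δ s :=
  mul_nonneg (sq_nonneg δ) (hσ0 _)

theorem sigmaDel_le (hσle : ∀ t, σ t ≤ 1/100) (δ s : ℝ) : sigmaDel σ δ s ≤ δ ^ 2 / 100 := by
  have := mul_le_mul_of_nonneg_left (hσle (s / δ)) (sq_nonneg δ)
  rw [sigmaDel]
  linarith

theorem abs_sigmaDel_mul_le (hσ0 : ∀ t, 0 ≤ σ t) (hσle : ∀ t, σ t ≤ 1/100) {t a : ℝ}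
    (ht : |t| ≤ a) : |sigmaDel σ δ s * t| ≤ δ ^ 2 / 100 * a := by
  rw [abs_mul, abs_of_nonneg (sigmaDel_nonneg hσ0 δ s)]
  exact mul_le_mul (sigmaDel_le hσle δ s) ht (abs_nonneg t) (by positivity)

theorem continuous_sigmaDel (hσ : Continuous σ) (δ : ℝ) : Continuous (sigmaDel σ δ) := by
  unfold sigmaDel
  fun_prop

theorem sigmaDel_eq_zero_of_half_lt_abs (hσsupp : Function.support σ ⊆ Icc (-(1/2)) (1/2))
    (hδ : 0 < δ) (hs : δ / 2 < |s|) : sigmaDel σ δ s = 0 := by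
  have hσs : σ (s / δ) = 0 := by
    refine Function.notMem_support.mp fun h => ?_
    have := abs_le.mpr (hσsupp h)
    rw [abs_div, abs_of_pos hδ, div_le_iff₀ hδ] at this
    linarith
  rw [sigmaDel, hσs, mul_zero]

theorem sub_sigmaDel_mul_mem_Ioo (hσ0 : ∀ t, 0 ≤ σ t) (hσle : ∀ t, σ t ≤ 1/100)
    (hδ : δ ^ 2 ≤ ε) (hs : s ∈ Ioo (-ε) ε) {t : ℝ} (ht : t ∈ Ioo (-2) 2) :
    s - sigmaDel σ δ s * t ∈ Ioo (-(2 * ε)) (2 * ε) := by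
  have := abs_le.mp (abs_sigmaDel_mul_le (δ := δ) (s := s) hσ0 hσle (abs_lt.mpr ht).le)
  constructor <;> linarith [hs.1, hs.2]

theorem continuousOn_mollify_integrand (hφ : Continuous φ)
    (hφsupp : Function.support φ ⊆ Icc (-1) 1) (hσ : Continuous σ) (hσ0 : ∀ t, 0 ≤ σ t)
    (hσle : ∀ t, σ t ≤ 1/100) (hγ : ContinuousOn γ (Ioo (-(2 * ε)) (2 * ε))) (hδ : δ ^ 2 ≤ ε) :
    ContinuousOn (fun p : ℝ × ℝ => φ p.2 • γ (p.1 - sigmaDel σ δ p.1 * p.2))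
      (Ioo (-ε) ε ×ˢ univ) := by
  refine continuousOn_smul_of_tsupport_subset hφ isOpen_Ioo ?_ ?_ (V := Ioo (-2) 2)
  · exact (closure_minimal hφsupp isClosed_Icc).trans (Icc_subset_Ioo (by norm_num) (by norm_num))
  · have hc := continuous_sigmaDel hσ δ
    refine hγ.comp (by fun_prop) fun p hp => ?_
    exact sub_sigmaDel_mul_mem_Ioo hσ0 hσle hδ hp.1 hp.2

theorem continuousOn_mollify (hφ : Continuous φ) (hφsupp : Function.support φ ⊆ Icc (-1) 1)
    (hσ : Continuous σ) (hσ0 : ∀ t, 0 ≤ σ t) (hσle : ∀ t, σ t ≤ 1/100)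
    (hγ : ContinuousOn γ (Ioo (-(2 * ε)) (2 * ε))) (hδ : δ ^ 2 ≤ ε) :
    ContinuousOn (mollify φ σ δ γ) (Ioo (-ε) ε) :=
  continuousOn_integral_of_compact_support isCompact_Icc
    (continuousOn_mollify_integrand hφ hφsupp hσ hσ0 hσle hγ hδ) fun _ _ _ ht => by
      rw [Function.notMem_support.mp (mt (@hφsupp _) ht), zero_smul]

theorem integrable_mollify_integrand (hφ : Continuous φ)
    (hφsupp : Function.support φ ⊆ Icc (-1) 1) (hσ : Continuous σ) (hσ0 : ∀ t, 0 ≤ σ t)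
    (hσle : ∀ t, σ t ≤ 1/100) (hγ : ContinuousOn γ (Ioo (-(2 * ε)) (2 * ε))) (hδ : δ ^ 2 ≤ ε)
    (hs : s ∈ Ioo (-ε) ε) : Integrable fun t => φ t • γ (s - sigmaDel σ δ s * t) := by
  refine ((continuousOn_mollify_integrand hφ hφsupp hσ hσ0 hσle hγ hδ).comp_continuous
    (Continuous.prodMk_right s) fun _ => ⟨hs, trivial⟩).integrable_of_hasCompactSupport ?_
  exact HasCompactSupport.intro isCompact_Icc fun t ht => by
    show φ t • _ = 0
    rw [Function.notMem_support.mp (mt (@hφsupp _) ht), zero_smul]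

variable [CompleteSpace E]

theorem mollify_eq_self_of_sigmaDel_eq_zero (hφint : ∫ t, φ t = 1) (h : sigmaDel σ δ s = 0) :
    mollify φ σ δ γ s = γ s := by
  simp only [mollify, h, zero_mul, sub_zero, integral_smul_const, hφint, one_smul]

theorem mollify_sub_eq_integral (hφint : ∫ t, φ t = 1)
    (hint : Integrable fun t => φ t • γ (s - sigmaDel σ δ s * t)) :
    mollify φ σ δ γ s - γ s = ∫ t, φ t • (γ (s - sigmaDel σ δ s * t) - γ s) := by
  have hφI : Integrable φ := Integrable.of_integral_ne_zero (by simp [hφint])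
  simp_rw [smul_sub]
  rw [integral_sub hint (hφI.smul_const _), integral_smul_const, hφint, one_smul, mollify]

theorem norm_mollify_sub_le (hφ : Continuous φ) (hφsupp : Function.support φ ⊆ Icc (-1) 1)
    (hφ0 : ∀ t, 0 ≤ φ t) (hφint : ∫ t, φ t = 1) (hσ : Continuous σ) (hσ0 : ∀ t, 0 ≤ σ t)
    (hσle : ∀ t, σ t ≤ 1/100) (hγ : ContinuousOn γ (Ioo (-(2 * ε)) (2 * ε))) (hδ : δ ^ 2 ≤ ε)
    (hs : s ∈ Ioo (-ε) ε) :
    ‖mollify φ σ δ γ s - γ s‖ ≤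
      sSup ((fun u => ‖γ u - γ s‖) '' {u | u ∈ Ioo (-(2 * ε)) (2 * ε) ∧ |u - s| ≤ δ ^ 2 / 100}) := by
  rw [mollify_sub_eq_integral hφint
    (integrable_mollify_integrand hφ hφsupp hσ hσ0 hσle hγ hδ hs)]
  have hball : Icc (s - δ ^ 2 / 100) (s + δ ^ 2 / 100) ⊆ Ioo (-(2 * ε)) (2 * ε) := fun x hx => by
    constructor <;> linarith [hx.1, hx.2, hs.1, hs.2]
  refine norm_integral_smul_le hφ0 hφint fun t ht =>
    le_csSup (bddAbove_image_norm_sub hγ hball) ⟨_, ⟨?_, ?_⟩, rfl⟩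
  · exact sub_sigmaDel_mul_mem_Ioo hσ0 hσle hδ hs
      ⟨by linarith [(hφsupp ht).1], by linarith [(hφsupp ht).2]⟩
  · rw [sub_sub_cancel_left, abs_neg]
    simpa using abs_sigmaDel_mul_le (δ := δ) (s := s) hσ0 hσle (abs_le.mpr (hφsupp ht))

end

theorem mollify_continuous_eq_outside_and_close_general
    {E : Type*} [NormedAddCommGroup E] [NormedSpace ℝ E] [CompleteSpace E]
    (ε : ℝ) (hε1 : ε ≤ 1)
    (φ σ : ℝ → ℝ)
    (hφsm : ContDiff ℝ (⊤ : ℕ∞) φ) (hφsupp : Function.support φ ⊆ Set.Icc (-1) 1)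
    (hφ0 : ∀ t, 0 ≤ φ t) (hφint : (∫ t : ℝ, φ t) = 1)
    (hσsm : ContDiff ℝ (⊤ : ℕ∞) σ) (hσsupp : Function.support σ ⊆ Set.Icc (-(1/2)) (1/2))
    (hσ0 : ∀ t, 0 ≤ σ t) (hσle : ∀ t, σ t ≤ 1/100)
    (γ : ℝ → E)
    (hγcont : ContinuousOn γ (Set.Ioo (-(2*ε)) (2*ε)))
    (δ : ℝ) (hδ0 : 0 < δ) (hδε : δ ≤ ε)
 :
    ContinuousOn (mollify φ σ δ γ) (Set.Ioo (-ε) ε) ∧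
    (∀ s ∈ Set.Ioo (-ε) ε, δ/2 < |s| → mollify φ σ δ γ s = γ s) ∧
    (∀ s ∈ Set.Ioo (-ε) ε,
      ‖mollify φ σ δ γ s - γ s‖ ≤
        sSup ((fun u => ‖γ u - γ s‖) ''
          {u | u ∈ Set.Ioo (-(2*ε)) (2*ε) ∧ |u - s| ≤ δ^2/100})) := by
  have hδ2 : δ ^ 2 ≤ ε := by nlinarith
  refine ⟨continuousOn_mollify hφsm.continuous hφsupp hσsm.continuous hσ0 hσle hγcont hδ2,
    fun s _ hs => mollify_eq_self_of_sigmaDel_eq_zero hφint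
      (sigmaDel_eq_zero_of_half_lt_abs hσsupp hδ0 hs),
    fun s hs => norm_mollify_sub_le hφsm.continuous hφsupp hφ0 hφint hσsm.continuous hσ0 hσle
      hγcont hδ2 hs⟩

theorem mollify_continuous_eq_outside_and_close
    {E : Type*} [NormedAddCommGroup E] [NormedSpace ℝ E] [CompleteSpace E]
    (ε : ℝ) (hε0 : 0 < ε) (hε1 : ε ≤ 1)
    (φ σ : ℝ → ℝ)
    (hφsm : ContDiff ℝ (⊤ : ℕ∞) φ) (hφsupp : Function.support φ ⊆ Set.Icc (-1) 1)
    (hφ0 : ∀ t, 0 ≤ φ t) (hφ1 : ∀ t, φ t ≤ 1) (hφint : (∫ t : ℝ, φ t) = 1)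
    (hσsm : ContDiff ℝ (⊤ : ℕ∞) σ) (hσsupp : Function.support σ ⊆ Set.Icc (-(1/2)) (1/2))
    (hσ0 : ∀ t, 0 ≤ σ t) (hσle : ∀ t, σ t ≤ 1/100)
    (hσeq : ∀ t : ℝ, |t| ≤ 1/4 → σ t = 1/100)
    (hσpos : ∀ t : ℝ, 1/4 < |t| → |t| < 1/2 → 0 < σ t)
    (γ : ℝ → E)
    (hγcont : ContinuousOn γ (Set.Ioo (-(2*ε)) (2*ε)))
    (δ : ℝ) (hδ0 : 0 < δ) (hδε : δ ≤ ε)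
 :
    ContinuousOn (mollify φ σ δ γ) (Set.Ioo (-ε) ε) ∧
    (∀ s ∈ Set.Ioo (-ε) ε, δ/2 < |s| → mollify φ σ δ γ s = γ s) ∧
    (∀ s ∈ Set.Ioo (-ε) ε,
      ‖mollify φ σ δ γ s - γ s‖ ≤
        sSup ((fun u => ‖γ u - γ s‖) ''
          {u | u ∈ Set.Ioo (-(2*ε)) (2*ε) ∧ |u - s| ≤ δ^2/100})) :=
  mollify_continuous_eq_outside_and_close_general ε hε1 φ σ hφsm hφsupp hφ0 hφint hσsm hσsupp hσ0
    hσle γ hγcont δ hδ0 hδε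
end

section
/- Let γ: (-2ε,2ε) → E be piecewise C¹ (with corner at 0) and let δ ∈ (0,ε]. Then for every t ∈ (-ε,ε), γ_δ is differentiable at t and its derivative is given by the formula γ_δ′(t) = ∫_ℝ γ′(t − σ_δ(t)s) · (1 − s·δ·σ′(t/δ)) · φ(s) ds. -/
/-!
Differentiation under the integral sign, with a Lipschitz dominating function. By the mean value
inequality for right derivatives, a piecewise `C¹` curve is Lipschitz on every compact
subinterval, and `σ_δ` is smooth, so `x ↦ φ u • γ (x - σ_δ x * u)` is Lipschitz near `t` with a
constant proportional to `|φ u|`. The chain rule gives its derivative at `t` for every `u` with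
`t - σ_δ t * u ≠ 0`; since `σ_δ 0 = δ² / 100 ≠ 0`, this excludes at most the single point
`u = t / σ_δ t`, a null set.
-/

open MeasureTheory Set

open Filter Topology
open scoped NNReal

section

variable {E : Type*} [NormedAddCommGroup E] [NormedSpace ℝ E]

theorem aestronglyMeasurable_of_hasDerivAt_ae {α : Type*} [MeasurableSpace α] {μ : Measure α}
    {F : ℝ → α → E} {F' : α → E} {x₀ : ℝ}
    (hF : ∀ᶠ x in 𝓝 x₀, AEStronglyMeasurable (F x) μ)
    (hF' : ∀ᵐ a ∂μ, HasDerivAt (F · a) (F' a) x₀) :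
    AEStronglyMeasurable F' μ := by
  obtain ⟨x, hx⟩ := exists_seq_tendsto (𝓝[≠] x₀)
  obtain ⟨N, hN⟩ := eventually_atTop.1 (hx.eventually (nhdsWithin_le_nhds hF))
  refine aestronglyMeasurable_of_tendsto_ae atTop
    (f := fun n a ↦ slope (F · a) x₀ (x (n + N))) (fun n ↦ ?_) ?_
  · simp only [slope_def_module]
    exact ((hN _ (Nat.le_add_left N n)).sub hF.self_of_nhds).const_smul _
  · filter_upwards [hF'] with a ha
    exact (hasDerivAt_iff_tendsto_slope.1 ha).comp (hx.comp (tendsto_add_atTop_nat N))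

theorem lipschitzOnWith_of_norm_deriv_right_le {f f' : ℝ → E} {a b C : ℝ}
    (hf : ContinuousOn f (Icc a b))
    (hf' : ∀ x ∈ Ico a b, HasDerivWithinAt f (f' x) (Ici x) x)
    (bound : ∀ x ∈ Ico a b, ‖f' x‖ ≤ C) :
    LipschitzOnWith (Real.toNNReal C) f (Icc a b) := by
  refine LipschitzOnWith.of_dist_le' fun x hx y hy ↦ ?_
  wlog hxy : x ≤ y generalizing x y
  · rw [dist_comm, dist_comm x]
    exact this y hy x hx (le_of_not_ge hxy)
  have hsub : Icc x y ⊆ Icc a b := Icc_subset_Icc hx.1 hy.2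
  have := norm_image_sub_le_of_norm_deriv_right_le_segment (hf.mono hsub)
    (fun z hz ↦ hf' z ⟨hx.1.trans hz.1, hz.2.trans_le hy.2⟩)
    (fun z hz ↦ bound z ⟨hx.1.trans hz.1, hz.2.trans_le hy.2⟩) y ⟨hxy, le_rfl⟩
  rwa [dist_comm, dist_eq_norm, Real.dist_eq, abs_sub_comm, abs_of_nonneg (sub_nonneg.2 hxy)]

theorem exists_lipschitzOnWith_of_piecewise_contDiffOn {γ γ' : ℝ → E} {a b a' b' : ℝ}
    (ha : a < a') (hb : b' < b) (hγ : ContinuousOn γ (Ioo a b))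
    (hγm : ContDiffOn ℝ 1 γ (Ioc a 0)) (hγp : ContDiffOn ℝ 1 γ (Ico 0 b))
    (hγ' : ∀ u ∈ Ioo a b, u ≠ 0 → HasDerivAt γ (γ' u) u)
    (hγ'0 : HasDerivWithinAt γ (γ' 0) (Ici 0) 0) :
    ∃ L, LipschitzOnWith L γ (Icc a' b') := by
  have hsub : Icc a' b' ⊆ Ioo a b := Icc_subset_Ioo ha hb
  obtain ⟨Cm, hCm⟩ := isCompact_Icc.exists_bound_of_continuousOn
    ((hγm.continuousOn_derivWithin (uniqueDiffOn_Ioc a 0) le_rfl).mono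
      (Icc_subset_Ioc ha (le_refl (0 : ℝ))))
  obtain ⟨Cp, hCp⟩ := isCompact_Icc.exists_bound_of_continuousOn
    ((hγp.continuousOn_derivWithin (uniqueDiffOn_Ico 0 b) le_rfl).mono
      (Icc_subset_Ico_right hb : Icc 0 b' ⊆ Ico 0 b))
  have hright : ∀ u ∈ Ico a' b', HasDerivWithinAt γ (γ' u) (Ici u) u := by
    rintro u hu
    rcases eq_or_ne u 0 with rfl | hu0
    · exact hγ'0
    · exact (hγ' u (hsub (Ico_subset_Icc_self hu)) hu0).hasDerivWithinAt
  refine ⟨_, lipschitzOnWith_of_norm_deriv_right_le (hγ.mono hsub) hright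
    (C := max Cm Cp) fun u hu ↦ ?_⟩
  have hu' := hsub (Ico_subset_Icc_self hu)
  rcases lt_trichotomy u 0 with hneg | rfl | hpos
  · have h := (hγ' u hu' hneg.ne).hasDerivWithinAt (s := Ioc a 0)
    rw [← h.derivWithin (uniqueDiffOn_Ioc a 0 u ⟨hu'.1, hneg.le⟩)]
    exact (hCm u ⟨hu.1, hneg.le⟩).trans (le_max_left _ _)
  · have h := hγ'0.mono (Ico_subset_Ici_self : Ico 0 b ⊆ Ici 0)
    rw [← h.derivWithin (uniqueDiffOn_Ico 0 b 0 ⟨le_rfl, by linarith [hu'.2]⟩)]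
    exact (hCp 0 ⟨le_rfl, hu.2.le⟩).trans (le_max_right _ _)
  · have h := (hγ' u hu' hpos.ne').hasDerivWithinAt (s := Ico 0 b)
    rw [← h.derivWithin (uniqueDiffOn_Ico 0 b u ⟨hpos.le, hu'.2⟩)]
    exact (hCp u ⟨hpos.le, hu.2.le⟩).trans (le_max_right _ _)

theorem ae_sub_mul_ne_zero {t c : ℝ} (h : t ≠ 0 ∨ c ≠ 0) : ∀ᵐ u ∂volume, t - c * u ≠ 0 := by
  rcases eq_or_ne c 0 with rfl | hc
  · simpa using h
  · filter_upwards [(countable_singleton (t / c)).ae_notMem volume] with u hu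
    contrapose! hu
    rw [mem_singleton_iff, eq_div_iff hc]
    linarith

theorem HasDerivAt.comp_sub_mul {γ : ℝ → E} {γ' : E} {a : ℝ → ℝ} {a' t u : ℝ}
    (hγ : HasDerivAt γ γ' (t - a t * u)) (ha : HasDerivAt a a' t) :
    HasDerivAt (fun x ↦ γ (x - a x * u)) ((1 - u * a') • γ') t := by
  rw [mul_comm u a']
  exact hγ.scomp t ((hasDerivAt_id t).sub (ha.mul_const u))

theorem LipschitzOnWith.smul_comp_sub_mul {γ : ℝ → E} {K s : Set ℝ} {L La : ℝ≥0} {a : ℝ → ℝ}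
    {u c : ℝ} (hγ : LipschitzOnWith L γ K) (ha : LipschitzOnWith La a s) (hu : |u| ≤ 1)
    (hmaps : MapsTo (fun x ↦ x - a x * u) s K) :
    LipschitzOnWith (Real.nnabs (‖c‖ * (L * (1 + La)))) (fun x ↦ c • γ (x - a x * u)) s := by
  refine LipschitzOnWith.of_dist_le_mul fun x hx y hy ↦ ?_
  have hinner : dist (x - a x * u) (y - a y * u) ≤ (1 + La) * dist x y := by
    calc dist (x - a x * u) (y - a y * u) = |(x - y) - (a x - a y) * u| := by
          rw [Real.dist_eq]; ring_nf
      _ ≤ |x - y| + |a x - a y| * |u| := by rw [← abs_mul]; exact abs_sub _ _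
      _ ≤ dist x y + La * dist x y * 1 := by
          rw [← Real.dist_eq, ← Real.dist_eq]
          gcongr
          exact ha.dist_le_mul x hx y hy
      _ = (1 + La) * dist x y := by ring
  rw [Real.coe_nnabs, abs_of_nonneg (by positivity), dist_smul₀, mul_assoc]
  gcongr
  calc dist (γ (x - a x * u)) (γ (y - a y * u)) ≤ L * dist (x - a x * u) (y - a y * u) :=
        hγ.dist_le_mul _ (hmaps hx) _ (hmaps hy)
    _ ≤ L * ((1 + La) * dist x y) := by gcongr
    _ = L * (1 + La) * dist x y := by ring

theorem hasDerivAt_integral_smul_comp_sub_mul {φ : ℝ → ℝ} (hφ : Continuous φ)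
    (hφsupp : Function.support φ ⊆ Icc (-1) 1)
    {γ γ' : ℝ → E} {K : Set ℝ} {L : ℝ≥0} (hγ : LipschitzOnWith L γ K)
    (hγ' : ∀ y ∈ K, y ≠ 0 → HasDerivAt γ (γ' y) y)
    {a : ℝ → ℝ} {a' t : ℝ} {s : Set ℝ} {La : ℝ≥0} (hs : s ∈ 𝓝 t)
    (ha : LipschitzOnWith La a s) (ha' : HasDerivAt a a' t)
    (hmaps : ∀ u ∈ Icc (-1) 1, MapsTo (fun x ↦ x - a x * u) s K)
    (hcorner : t ≠ 0 ∨ a t ≠ 0) :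
    HasDerivAt (fun x ↦ ∫ u, φ u • γ (x - a x * u))
      (∫ u, ((1 - u * a') * φ u) • γ' (t - a t * u)) t := by
  have hint : ∀ x ∈ s, Integrable (fun u ↦ φ u • γ (x - a x * u)) := fun x hx ↦
    (integrableOn_iff_integrable_of_support_subset
      ((Function.support_smul_subset_left _ _).trans hφsupp)).1
      ((hφ.continuousOn.smul (hγ.continuousOn.comp (by fun_prop)
        fun u hu ↦ hmaps u hu hx)).integrableOn_compact isCompact_Icc)
  have hF_meas : ∀ᶠ x in 𝓝 t, AEStronglyMeasurable (fun u ↦ φ u • γ (x - a x * u)) :=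
    eventually_of_mem hs fun x hx ↦ (hint x hx).aestronglyMeasurable
  have hdiff : ∀ᵐ u, HasDerivAt (fun x ↦ φ u • γ (x - a x * u))
      (((1 - u * a') * φ u) • γ' (t - a t * u)) t := by
    filter_upwards [ae_sub_mul_ne_zero hcorner] with u hu
    rcases eq_or_ne (φ u) 0 with h0 | h0
    · simp only [h0, zero_smul, mul_zero]
      exact hasDerivAt_const t 0
    · have hK := hmaps u (hφsupp h0) (mem_of_mem_nhds hs)
      rw [mul_comm, mul_smul]
      exact ((hγ' _ hK hu).comp_sub_mul ha').const_smul (φ u)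
  have hlip : ∀ u, LipschitzOnWith (Real.nnabs (‖φ u‖ * (L * (1 + La))))
      (fun x ↦ φ u • γ (x - a x * u)) s := by
    intro u
    rcases eq_or_ne (φ u) 0 with h0 | h0
    · simp only [h0, zero_smul]
      exact (LipschitzWith.const' 0).lipschitzOnWith
    · exact hγ.smul_comp_sub_mul ha (abs_le.2 (hφsupp h0)) (hmaps u (hφsupp h0))
  have hbound : Integrable fun u ↦ ‖φ u‖ * (L * (1 + La)) :=
    ((hφ.integrable_of_hasCompactSupport
      (HasCompactSupport.intro isCompact_Icc fun u hu ↦ Function.notMem_support.1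
        (mt (@hφsupp u) hu))).norm).mul_const _
  exact (hasDerivAt_integral_of_dominated_loc_of_lip hs hF_meas (hint t (mem_of_mem_nhds hs))
    (aestronglyMeasurable_of_hasDerivAt_ae hF_meas hdiff) (ae_of_all _ hlip) hbound hdiff).2

end

theorem hasDerivAt_sigmaDel {σ : ℝ → ℝ} {δ t : ℝ} (hσ : DifferentiableAt ℝ σ (t / δ))
    (hδ : δ ≠ 0) : HasDerivAt (sigmaDel σ δ) (δ * deriv σ (t / δ)) t := by
  have h := (hσ.hasDerivAt.comp t ((hasDerivAt_id t).div_const δ)).const_mul (δ ^ 2)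
  rwa [show δ ^ 2 * (deriv σ (t / δ) * (1 / δ)) = δ * deriv σ (t / δ) by field_simp] at h

theorem contDiff_sigmaDel {σ : ℝ → ℝ} {n : WithTop ℕ∞} (hσ : ContDiff ℝ n σ) (δ : ℝ) :
    ContDiff ℝ n (sigmaDel σ δ) := by
  unfold sigmaDel
  fun_prop

theorem abs_sigmaDel_le {σ : ℝ → ℝ} {M : ℝ} (hσ : ∀ t, |σ t| ≤ M) (δ t : ℝ) :
    |sigmaDel σ δ t| ≤ δ ^ 2 * M := by
  rw [sigmaDel, abs_mul, abs_of_nonneg (sq_nonneg δ)]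
  exact mul_le_mul_of_nonneg_left (hσ _) (sq_nonneg δ)

theorem mapsTo_sub_sigmaDel_mul {σ : ℝ → ℝ} {δ ε u : ℝ} (hσ : ∀ y, |σ y| ≤ 1 / 100)
    (hδ : δ ^ 2 ≤ ε) (hu : u ∈ Icc (-1) 1) :
    MapsTo (fun x ↦ x - sigmaDel σ δ x * u) (Ioo (-ε) ε) (Icc (-(3 * ε / 2)) (3 * ε / 2)) := by
  intro x hx
  have hsu : |sigmaDel σ δ x * u| ≤ ε / 2 := calc
    |sigmaDel σ δ x * u| = |sigmaDel σ δ x| * |u| := abs_mul _ _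
    _ ≤ δ ^ 2 * (1 / 100) * 1 :=
        mul_le_mul (abs_sigmaDel_le hσ δ x) (abs_le.2 hu) (abs_nonneg _) (by positivity)
    _ ≤ ε / 2 := by linarith [hx.1, hx.2]
  have := abs_le.1 hsu
  exact ⟨by linarith [hx.1], by linarith [hx.2]⟩

theorem mollify_hasDerivAt_general
    {E : Type*} [NormedAddCommGroup E] [NormedSpace ℝ E]
    (ε : ℝ) (hε0 : 0 < ε) (hε1 : ε ≤ 1)
    (φ σ : ℝ → ℝ)
    (hφsm : ContDiff ℝ (⊤ : ℕ∞) φ) (hφsupp : Function.support φ ⊆ Set.Icc (-1) 1)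
    (hσsm : ContDiff ℝ (⊤ : ℕ∞) σ)
    (hσ0 : ∀ t, 0 ≤ σ t) (hσle : ∀ t, σ t ≤ 1/100)
    (hσeq : ∀ t : ℝ, |t| ≤ 1/4 → σ t = 1/100)
    (γ : ℝ → E)
    (hγcont : ContinuousOn γ (Set.Ioo (-(2*ε)) (2*ε)))
    (hγm : ContDiffOn ℝ 1 γ (Set.Ioc (-(2*ε)) 0))
    (hγp : ContDiffOn ℝ 1 γ (Set.Ico 0 (2*ε)))
    (γ' : ℝ → E)
    (hγ'1 : ∀ u ∈ Set.Ioo (-(2*ε)) (2*ε), u ≠ 0 → HasDerivAt γ (γ' u) u)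
    (hγ'0 : HasDerivWithinAt γ (γ' 0) (Set.Ici 0) 0)
    (δ : ℝ) (hδ0 : 0 < δ) (hδε : δ ≤ ε)
 :
    ∀ t ∈ Set.Ioo (-ε) ε,
      HasDerivAt (mollify φ σ δ γ)
        (∫ s : ℝ, ((1 - s * δ * deriv σ (t/δ)) * φ s) • γ' (t - sigmaDel σ δ t * s)) t := by
  intro t ht
  have hσ1 : ContDiff ℝ 1 σ := hσsm.of_le (by exact_mod_cast le_top)
  have hK : Icc (-(3 * ε / 2)) (3 * ε / 2) ⊆ Ioo (-(2 * ε)) (2 * ε) :=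
    Icc_subset_Ioo (by linarith) (by linarith)
  obtain ⟨L, hL⟩ := exists_lipschitzOnWith_of_piecewise_contDiffOn
    (by linarith : -(2 * ε) < -(3 * ε / 2)) (by linarith : 3 * ε / 2 < 2 * ε)
    hγcont hγm hγp hγ'1 hγ'0
  have hσbound (y : ℝ) : |σ y| ≤ 1 / 100 := abs_le.2 ⟨by linarith [hσ0 y], hσle y⟩
  have hδ : δ ^ 2 ≤ ε := by nlinarith
  obtain ⟨La, s, hs, hLa⟩ := (contDiff_sigmaDel hσ1 δ).contDiffAt.exists_lipschitzOnWith
  have hcorner : t ≠ 0 ∨ sigmaDel σ δ t ≠ 0 := by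
    rcases eq_or_ne t 0 with rfl | ht0
    · right
      simp [sigmaDel, hσeq 0 (by norm_num), hδ0.ne']
    · exact Or.inl ht0
  have key := hasDerivAt_integral_smul_comp_sub_mul hφsm.continuous hφsupp hL
    (fun y hy ↦ hγ'1 y (hK hy)) (inter_mem hs (Ioo_mem_nhds ht.1 ht.2))
    (hLa.mono inter_subset_left) (hasDerivAt_sigmaDel (hσ1.differentiable one_ne_zero _) hδ0.ne')
    (fun u hu ↦ (mapsTo_sub_sigmaDel_mul hσbound hδ hu).mono_left inter_subset_right) hcorner
  simp only [← mul_assoc] at key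
  exact key

theorem mollify_hasDerivAt
    {E : Type*} [NormedAddCommGroup E] [NormedSpace ℝ E] [CompleteSpace E]
    (ε : ℝ) (hε0 : 0 < ε) (hε1 : ε ≤ 1)
    (φ σ : ℝ → ℝ)
    (hφsm : ContDiff ℝ (⊤ : ℕ∞) φ) (hφsupp : Function.support φ ⊆ Set.Icc (-1) 1)
    (hφ0 : ∀ t, 0 ≤ φ t) (hφ1 : ∀ t, φ t ≤ 1) (hφint : (∫ t : ℝ, φ t) = 1)
    (hσsm : ContDiff ℝ (⊤ : ℕ∞) σ) (hσsupp : Function.support σ ⊆ Set.Icc (-(1/2)) (1/2))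
    (hσ0 : ∀ t, 0 ≤ σ t) (hσle : ∀ t, σ t ≤ 1/100)
    (hσeq : ∀ t : ℝ, |t| ≤ 1/4 → σ t = 1/100)
    (hσpos : ∀ t : ℝ, 1/4 < |t| → |t| < 1/2 → 0 < σ t)
    (γ : ℝ → E)
    (hγcont : ContinuousOn γ (Set.Ioo (-(2*ε)) (2*ε)))
    (hγm : ContDiffOn ℝ 1 γ (Set.Ioc (-(2*ε)) 0))
    (hγp : ContDiffOn ℝ 1 γ (Set.Ico 0 (2*ε)))
    (γ' : ℝ → E)
    (hγ'1 : ∀ u ∈ Set.Ioo (-(2*ε)) (2*ε), u ≠ 0 → HasDerivAt γ (γ' u) u)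
    (hγ'0 : HasDerivWithinAt γ (γ' 0) (Set.Ici 0) 0)
    (δ : ℝ) (hδ0 : 0 < δ) (hδε : δ ≤ ε)
 :
    ∀ t ∈ Set.Ioo (-ε) ε,
      HasDerivAt (mollify φ σ δ γ)
        (∫ s : ℝ, ((1 - s * δ * deriv σ (t/δ)) * φ s) • γ' (t - sigmaDel σ δ t * s)) t :=
  mollify_hasDerivAt_general ε hε0 hε1 φ σ hφsm hφsupp hσsm hσ0 hσle hσeq γ hγcont hγm hγp γ' hγ'1
    hγ'0 δ hδ0 hδε
end

section
/- Let γ: (-2ε,2ε) → E be piecewise C² (with corner at 0), let γ₊′(0) and γ₋′(0) denote the right-hand and left-hand derivatives of γ at 0, set M₂ = sup_{u ∈ (-2ε,2ε) \ {0}} ‖γ″(u)‖ (assumed finite), and let δ ∈ (0,ε]. Then for every t with |t| ≤ δ²/100, ‖γ_δ″(t) − (γ₊′(0) − γ₋′(0)) · (100/δ²) · φ(100t/δ²)‖ ≤ M₂; i.e., up to an error bounded independently of δ, the second derivative of the mollified path concentrates the jump of the first derivative of γ as a kernel of total integral 1 supported in [-δ²/100, δ²/100]. -/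
open MeasureTheory Set

/-!
For `|s| ≤ δ/4` the scale `σ_δ(s)` equals `c = δ²/100`, so near `0` the path `γ_δ` is the
convolution `x ↦ ∫ φ(u) γ(x - c u) du`. Subtracting the ramp `max(z, 0) • (γ₊′(0) - γ₋′(0))`
turns `γ` into a `C¹` function `g` whose derivative is `M₂`-Lipschitz. The convolution of the ramp
has second derivative `c⁻¹ φ(x/c)`, the concentrating kernel, while the second derivative of the
convolution of `g` is a `φ`-average of `g″`, hence bounded by `M₂`.
-/

open Filter Topology Metric
open scoped NNReal

theorem Continuous.integrable_of_support_subset {F X : Type*} [NormedAddCommGroup F]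
    [TopologicalSpace X] [T2Space X] [MeasurableSpace X] [OpensMeasurableSpace X] {μ : Measure X}
    [IsFiniteMeasureOnCompacts μ]
    {f : X → F} {K : Set X} (hf : Continuous f) (hK : IsCompact K)
    (hsupp : Function.support f ⊆ K) : Integrable f μ :=
  hf.integrable_of_hasCompactSupport
    (HasCompactSupport.intro hK fun _ hx => Function.notMem_support.1 fun h => hx (hsupp h))

section Calculus

variable {E : Type*} [NormedAddCommGroup E] [NormedSpace ℝ E]

theorem integrable_smul_of_support_subset {X : Type*} [TopologicalSpace X] [T2Space X]
    [MeasurableSpace X] [OpensMeasurableSpace X] {μ : Measure X} [IsFiniteMeasureOnCompacts μ]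
    {φ : X → ℝ} {g : X → E} {K : Set X} (hφ : Continuous φ) (hK : IsCompact K)
    (hsupp : Function.support φ ⊆ K) (hg : ContinuousOn g K) :
    Integrable (fun u => φ u • g u) μ :=
  (integrableOn_iff_integrable_of_support_subset
    ((Function.support_smul_subset_left φ g).trans hsupp)).1
    ((hφ.continuousOn.smul hg).integrableOn_compact hK)

theorem norm_integral_smul_le_of_ae_le {α : Type*} [MeasurableSpace α] {μ : Measure α}
    {φ : α → ℝ} {f : α → E} {M : ℝ} (hφ0 : ∀ u, 0 ≤ φ u) (hφi : Integrable φ μ)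
    (hφ1 : ∫ u, φ u ∂μ = 1) (hf : ∀ᵐ u ∂μ, φ u ≠ 0 → ‖f u‖ ≤ M) :
    ‖∫ u, φ u • f u ∂μ‖ ≤ M := by
  have hle : ∀ᵐ u ∂μ, ‖φ u • f u‖ ≤ φ u * M := by
    filter_upwards [hf] with u hu
    rcases eq_or_ne (φ u) 0 with h0 | h0
    · simp [h0]
    · rw [norm_smul, Real.norm_of_nonneg (hφ0 u)]
      exact mul_le_mul_of_nonneg_left (hu h0) (hφ0 u)
  calc ‖∫ u, φ u • f u ∂μ‖ ≤ ∫ u, φ u * M ∂μ := norm_integral_le_of_norm_le (hφi.mul_const M) hle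
    _ = M := by rw [integral_mul_const, hφ1, one_mul]

theorem sub_mul_mem_ball {c x x₀ R u : ℝ} (hc : 0 ≤ c) (hx : x ∈ ball x₀ (R - c))
    (hu : u ∈ Icc (-1 : ℝ) 1) : x - c * u ∈ ball x₀ R := by
  rw [mem_ball, Real.dist_eq] at hx ⊢
  have : |c * u| ≤ c := by
    rw [abs_mul, abs_of_nonneg hc]; exact mul_le_of_le_one_right hc (abs_le.2 hu)
  calc |x - c * u - x₀| = |(x - x₀) - c * u| := by ring_nf
    _ ≤ |x - x₀| + |c * u| := abs_sub _ _
    _ < R := by linarith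

theorem hasDerivAt_integral_smul_comp_sub_mul_s11 [CompleteSpace E] {φ : ℝ → ℝ} {f : ℝ → E}
    {K : ℝ≥0} {c x₀ R : ℝ} (hφ : Continuous φ) (hsupp : Function.support φ ⊆ Icc (-1) 1)
    (hc : 0 ≤ c) (hcR : c < R) (hf : LipschitzOnWith K f (ball x₀ R))
    (hdiff : ∀ᵐ u, u ∈ Icc (-1 : ℝ) 1 → DifferentiableAt ℝ f (x₀ - c * u)) :
    HasDerivAt (fun x => ∫ u, φ u • f (x - c * u)) (∫ u, φ u • deriv f (x₀ - c * u)) x₀ := by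
  have hφ0 : ∀ u ∉ Icc (-1 : ℝ) 1, φ u = 0 := fun u hu =>
    Function.notMem_support.1 fun h => hu (hsupp h)
  have hint : ∀ x ∈ ball x₀ (R - c), Integrable (fun u => φ u • f (x - c * u)) := fun x hx =>
    integrable_smul_of_support_subset hφ isCompact_Icc hsupp
      (hf.continuousOn.comp (by fun_prop) fun _ hu => sub_mul_mem_ball hc hx hu)
  have hball : ball x₀ (R - c) ∈ 𝓝 x₀ := ball_mem_nhds x₀ (sub_pos.2 hcR)
  refine (hasDerivAt_integral_of_dominated_loc_of_lip (bound := fun u => ‖φ u‖ * K) hball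
    ?_ (hint x₀ (mem_of_mem_nhds hball)) ?_ ?_ ?_ ?_).2
  · filter_upwards [hball] with x hx using (hint x hx).aestronglyMeasurable
  · exact hφ.aestronglyMeasurable.smul
      ((stronglyMeasurable_deriv f).comp_measurable (by fun_prop)).aestronglyMeasurable
  · refine ae_of_all _ fun u => LipschitzOnWith.of_dist_le_mul fun x hx y hy => ?_
    by_cases hu : u ∈ Icc (-1 : ℝ) 1
    · rw [dist_smul₀, Real.coe_nnabs, abs_of_nonneg (by positivity), mul_assoc,
        ← dist_sub_right x y (c * u)]
      exact mul_le_mul_of_nonneg_left (hf.dist_le_mul _ (sub_mul_mem_ball hc hx hu) _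
        (sub_mul_mem_ball hc hy hu)) (norm_nonneg _)
    · simp [hφ0 u hu]
  · exact (hφ.integrable_of_support_subset isCompact_Icc hsupp).norm.mul_const _
  · filter_upwards [hdiff] with u hu
    by_cases hu' : u ∈ Icc (-1 : ℝ) 1
    · convert ((hu hu').hasDerivAt.scomp x₀
        ((hasDerivAt_id x₀).sub_const (c * u))).const_smul (φ u) using 1
      · rfl
      · rw [one_smul]
    · simpa [hφ0 u hu'] using hasDerivAt_const x₀ (0 : E)

theorem hasDerivAt_integral_Iio [CompleteSpace E] {φ : ℝ → E} (hφ : Continuous φ)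
    (hφi : Integrable φ) (a : ℝ) : HasDerivAt (fun b => ∫ u in Iio b, φ u) (φ a) a := by
  have hprim : ∀ b, ∫ u in Iio b, φ u = (∫ u in Iic a, φ u) + ∫ u in a..b, φ u := fun b => by
    rw [← integral_Iic_eq_integral_Iio,
      ← intervalIntegral.integral_Iic_sub_Iic hφi.integrableOn hφi.integrableOn, add_sub_cancel]
  simp only [hprim]
  exact (intervalIntegral.integral_hasDerivAt_right hφi.intervalIntegrable
    hφ.stronglyMeasurable.stronglyMeasurableAtFilter hφ.continuousAt).const_add _

theorem hasDerivAt_integral_smul_max_sub_mul {φ : ℝ → ℝ} {c x₀ : ℝ} (hφ : Continuous φ)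
    (hsupp : Function.support φ ⊆ Icc (-1) 1) (hc : 0 < c) :
    HasDerivAt (fun x => ∫ u, φ u • max (x - c * u) 0) (∫ u in Iio (x₀ / c), φ u) x₀ := by
  have hpos : ∀ z : ℝ, 0 < z → HasDerivAt (fun z => max z 0) 1 z := fun z hz =>
    (hasDerivAt_id z).congr_of_eventuallyEq
      (by filter_upwards [Ioi_mem_nhds hz] with w hw using max_eq_left hw.le)
  have hneg : ∀ z : ℝ, z < 0 → HasDerivAt (fun z => max z 0) 0 z := fun z hz =>
    (hasDerivAt_const z 0).congr_of_eventuallyEq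
      (by filter_upwards [Iio_mem_nhds hz] with w hw using max_eq_right hw.le)
  have hkink : ∀ᵐ u, x₀ - c * u ≠ 0 := by
    filter_upwards [volume.ae_ne (x₀ / c)] with u hu h
    exact hu (by rw [eq_div_iff hc.ne']; linarith)
  have h := hasDerivAt_integral_smul_comp_sub_mul_s11 (f := fun z => max z 0) (R := c + 1)
    hφ hsupp hc.le (by linarith) (LipschitzWith.id.max_const 0).lipschitzOnWith
    (hkink.mono fun u hu _ => hu.lt_or_gt.elim (fun h => (hneg _ h).differentiableAt)
      fun h => (hpos _ h).differentiableAt)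
  have heq : ∫ u, φ u • deriv (fun z => max z 0) (x₀ - c * u) = ∫ u in Iio (x₀ / c), φ u := by
    rw [← integral_indicator measurableSet_Iio]
    refine integral_congr_ae ?_
    filter_upwards [hkink] with u hu
    rcases hu.lt_or_gt with h | h
    · rw [(hneg _ h).deriv, indicator_of_notMem, smul_zero]
      rw [mem_Iio, not_lt, div_le_iff₀ hc]; linarith
    · rw [(hpos _ h).deriv, indicator_of_mem, smul_eq_mul, mul_one]
      rw [mem_Iio, lt_div_iff₀ hc]; linarith
  exact heq ▸ h

theorem tendsto_deriv_nhdsWithin_interior {𝕜 F : Type*} [NontriviallyNormedField 𝕜]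
    [NormedAddCommGroup F] [NormedSpace 𝕜 F] {f : 𝕜 → F} {s : Set 𝕜} {b : 𝕜} {v : F}
    (hs : UniqueDiffOn 𝕜 s) (hf : ContDiffOn 𝕜 1 f s) (hb : b ∈ s)
    (hv : HasDerivWithinAt f v s b) : Tendsto (deriv f) (𝓝[interior s] b) (𝓝 v) := by
  have h := (hf.continuousOn_derivWithin hs le_rfl b hb).tendsto
  rw [hv.derivWithin (hs b hb)] at h
  refine (h.mono_left (nhdsWithin_mono _ interior_subset)).congr' ?_
  filter_upwards [self_mem_nhdsWithin] with x hx
    using derivWithin_of_mem_nhds (mem_interior_iff_mem_nhds.1 hx)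

theorem LipschitzOnWith.Icc_union {α : Type*} [PseudoMetricSpace α] {f : ℝ → α} {K : ℝ≥0}
    {a b p : ℝ} (h₁ : LipschitzOnWith K f (Icc a p)) (h₂ : LipschitzOnWith K f (Icc p b)) :
    LipschitzOnWith K f (Icc a b) := by
  have key : ∀ x ∈ Icc a b, ∀ y ∈ Icc a b, x ≤ y → dist (f x) (f y) ≤ K * dist x y := by
    intro x hx y hy hxy
    rcases le_total y p with hyp | hpy
    · exact h₁.dist_le_mul x ⟨hx.1, hxy.trans hyp⟩ y ⟨hy.1, hyp⟩
    rcases le_total p x with hpx | hxp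
    · exact h₂.dist_le_mul x ⟨hpx, hx.2⟩ y ⟨hpx.trans hxy, hy.2⟩
    calc dist (f x) (f y) ≤ dist (f x) (f p) + dist (f p) (f y) := dist_triangle _ _ _
      _ ≤ K * dist x p + K * dist p y :=
          add_le_add (h₁.dist_le_mul x ⟨hx.1, hxp⟩ p ⟨hx.1.trans hxp, le_rfl⟩)
            (h₂.dist_le_mul p ⟨le_rfl, hpy.trans hy.2⟩ y ⟨hpy, hy.2⟩)
      _ = K * dist x y := by
          rw [Real.dist_eq, Real.dist_eq, Real.dist_eq, abs_of_nonpos (by linarith),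
            abs_of_nonpos (by linarith), abs_of_nonpos (by linarith)]
          ring
  refine LipschitzOnWith.of_dist_le_mul fun x hx y hy => ?_
  rcases le_total x y with hxy | hyx
  · exact key x hx y hy hxy
  · rw [dist_comm, dist_comm x]; exact key y hy x hx hyx

theorem lipschitzOnWith_Icc_of_hasDerivAt_of_ne {g g' : ℝ → E} {a b p : ℝ} {C : ℝ≥0}
    (hp : p ∈ Ioo a b) (hg : ContinuousOn g (Icc a b))
    (hderiv : ∀ x ∈ Ioo a b, x ≠ p → HasDerivAt g (g' x) x)
    (hbound : ∀ x ∈ Ioo a b, x ≠ p → ‖g' x‖ ≤ C) : LipschitzOnWith C g (Icc a b) := by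
  have hside : ∀ a' b', a' < b' → a ≤ a' → b' ≤ b → p ∉ Ioo a' b' →
      LipschitzOnWith C g (Icc a' b') := by
    intro a' b' hab ha hb hp'
    have hmem : ∀ x ∈ Ioo a' b', x ∈ Ioo a b ∧ x ≠ p := fun x hx =>
      ⟨⟨ha.trans_lt hx.1, hx.2.trans_le hb⟩, fun h => hp' (h ▸ hx)⟩
    rw [← closure_Ioo hab.ne]
    refine LipschitzOnWith.closure ?_
      ((convex_Ioo a' b').lipschitzOnWith_of_nnnorm_hasDerivWithin_le
        (fun x hx => (hderiv x (hmem x hx).1 (hmem x hx).2).hasDerivWithinAt) fun x hx => ?_)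
    · rw [closure_Ioo hab.ne]; exact hg.mono (Icc_subset_Icc ha hb)
    · exact_mod_cast hbound x (hmem x hx).1 (hmem x hx).2
  exact (hside a p hp.1 le_rfl hp.2.le (by simp)).Icc_union
    (hside p b hp.2 hp.1.le le_rfl (by simp))

end Calculus

section RemoveKink

variable {E : Type*} [NormedAddCommGroup E] [NormedSpace ℝ E] {γ γ' : ℝ → E} {J v vp vm γ₂ : E}
  {z : ℝ}

/-- Removes a jump `J` of `γ′` at `0`. -/
def removeKink (γ : ℝ → E) (J : E) (z : ℝ) : E := γ z - max z 0 • J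

theorem removeKink_add_max_smul (γ : ℝ → E) (J : E) (z : ℝ) :
    removeKink γ J z + max z 0 • J = γ z :=
  sub_add_cancel _ _

theorem removeKink_eventuallyEq_of_neg (hz : z < 0) : removeKink γ J =ᶠ[𝓝 z] γ := by
  filter_upwards [Iio_mem_nhds hz] with w hw
  simp [removeKink, max_eq_right (mem_Iio.1 hw).le]

theorem hasDerivAt_removeKink_of_neg (hγ : HasDerivAt γ v z) (hz : z < 0) :
    HasDerivAt (removeKink γ J) v z :=
  hγ.congr_of_eventuallyEq (removeKink_eventuallyEq_of_neg hz)

theorem hasDerivAt_removeKink_of_pos (hγ : HasDerivAt γ v z) (hz : 0 < z) :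
    HasDerivAt (removeKink γ J) (v - J) z := by
  have h := hγ.sub ((hasDerivAt_id z).smul_const J)
  rw [one_smul] at h
  refine h.congr_of_eventuallyEq ?_
  filter_upwards [Ioi_mem_nhds hz] with w hw
  simp [removeKink, max_eq_left (mem_Ioi.1 hw).le]

theorem hasDerivAt_removeKink_zero (hp : HasDerivWithinAt γ vp (Ici 0) 0)
    (hm : HasDerivWithinAt γ vm (Iic 0) 0) : HasDerivAt (removeKink γ (vp - vm)) vm 0 := by
  rw [← hasDerivWithinAt_univ, ← Iic_union_Ici (a := (0 : ℝ))]
  refine HasDerivWithinAt.union ?_ ?_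
  · have hramp : HasDerivWithinAt (fun w : ℝ => max w 0 • (vp - vm)) 0 (Iic 0) 0 := by
      refine (hasDerivWithinAt_const _ _ (0 : E)).congr (fun w hw => ?_) ?_
      · simp [max_eq_right (mem_Iic.1 hw)]
      · simp
    have h := hm.sub hramp
    rw [sub_zero] at h
    exact h
  · have hramp : HasDerivWithinAt (fun w : ℝ => max w 0 • (vp - vm)) (vp - vm) (Ici 0) 0 := by
      have hid := (hasDerivAt_id (0 : ℝ)).smul_const (vp - vm)
      rw [one_smul] at hid
      refine hid.hasDerivWithinAt.congr (fun w hw => ?_) ?_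
      · simp [max_eq_left (mem_Ici.1 hw)]
      · simp
    have h := hp.sub hramp
    rw [sub_sub_cancel] at h
    exact h

theorem differentiableAt_removeKink (hp : HasDerivWithinAt γ vp (Ici 0) 0)
    (hm : HasDerivWithinAt γ vm (Iic 0) 0) (hγ : z ≠ 0 → DifferentiableAt ℝ γ z) :
    DifferentiableAt ℝ (removeKink γ (vp - vm)) z := by
  rcases lt_trichotomy z 0 with h | rfl | h
  · exact (hasDerivAt_removeKink_of_neg (hγ h.ne).hasDerivAt h).differentiableAt
  · exact (hasDerivAt_removeKink_zero hp hm).differentiableAt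
  · exact (hasDerivAt_removeKink_of_pos (hγ h.ne').hasDerivAt h).differentiableAt

theorem hasDerivAt_deriv_removeKink {U : Set ℝ} (hU : IsOpen U)
    (hγ : ∀ w ∈ U, w ≠ 0 → HasDerivAt γ (γ' w) w) (hz : z ∈ U) (hz0 : z ≠ 0)
    (hγ' : HasDerivAt γ' γ₂ z) : HasDerivAt (deriv (removeKink γ J)) γ₂ z := by
  rcases hz0.lt_or_gt with hneg | hpos
  · refine hγ'.congr_of_eventuallyEq ?_
    filter_upwards [hU.mem_nhds hz, Iio_mem_nhds hneg] with w hwU hw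
    exact (hasDerivAt_removeKink_of_neg (hγ w hwU hw.ne) hw).deriv
  · refine (hγ'.sub_const J).congr_of_eventuallyEq ?_
    filter_upwards [hU.mem_nhds hz, Ioi_mem_nhds hpos] with w hwU hw
    exact (hasDerivAt_removeKink_of_pos (hγ w hwU hw.ne') hw).deriv

/-- The one-sided limits of `γ′` at `0` are the one-sided derivatives of `γ` there, so they
differ by exactly the jump that `removeKink` removes. -/
theorem continuousAt_deriv_removeKink_zero {a b : ℝ} (ha : a < 0) (hb : 0 < b)
    (hγm : ContDiffOn ℝ 1 γ (Ioc a 0)) (hγp : ContDiffOn ℝ 1 γ (Ico 0 b))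
    (hp : HasDerivWithinAt γ vp (Ici 0) 0) (hm : HasDerivWithinAt γ vm (Iic 0) 0) :
    ContinuousAt (deriv (removeKink γ (vp - vm))) 0 := by
  have hl := tendsto_deriv_nhdsWithin_interior (uniqueDiffOn_Ioc a 0) hγm (right_mem_Ioc.2 ha)
    (hm.mono Ioc_subset_Iic_self)
  have hr := tendsto_deriv_nhdsWithin_interior (uniqueDiffOn_Ico 0 b) hγp (left_mem_Ico.2 hb)
    (hp.mono Ico_subset_Ici_self)
  rw [interior_Ioc, nhdsWithin_Ioo_eq_nhdsLT ha] at hl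
  rw [interior_Ico, nhdsWithin_Ioo_eq_nhdsGT hb] at hr
  rw [continuousAt_iff_continuous_left_right, ← continuousWithinAt_Iio_iff_Iic,
    ← continuousWithinAt_Ioi_iff_Ici, ContinuousWithinAt, ContinuousWithinAt,
    (hasDerivAt_removeKink_zero hp hm).deriv]
  constructor
  · refine hl.congr' ?_
    filter_upwards [self_mem_nhdsWithin] with w hw
    exact (removeKink_eventuallyEq_of_neg hw).deriv_eq.symm
  · have h := hr.sub_const (vp - vm)
    rw [sub_sub_cancel] at h
    refine h.congr' ?_
    filter_upwards [Ioo_mem_nhdsGT hb] with w hw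
    have hγw : DifferentiableAt ℝ γ w := (hγp.differentiableOn one_ne_zero w
      (Ioo_subset_Ico_self hw)).differentiableAt (Ico_mem_nhds hw.1 hw.2)
    exact (hasDerivAt_removeKink_of_pos hγw.hasDerivAt hw.1).deriv.symm

end RemoveKink

section Convolution

variable {E : Type*} [NormedAddCommGroup E] [NormedSpace ℝ E] [CompleteSpace E] {φ : ℝ → ℝ}
  {γ : ℝ → E} {J : E} {c t : ℝ} {M : ℝ≥0}

theorem hasDerivAt_integral_smul_comp_sub_mul_of_removeKink {K : ℝ≥0} {x₀ R : ℝ}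
    (hφ : Continuous φ) (hsupp : Function.support φ ⊆ Icc (-1) 1) (hc : 0 < c) (hcR : c < R)
    (hg : LipschitzOnWith K (removeKink γ J) (ball x₀ R))
    (hdiff : ∀ z ∈ ball x₀ R, DifferentiableAt ℝ (removeKink γ J) z) :
    HasDerivAt (fun x => ∫ u, φ u • γ (x - c * u))
      ((∫ u, φ u • deriv (removeKink γ J) (x₀ - c * u)) + (∫ u in Iio (x₀ / c), φ u) • J) x₀ := by
  have hsplit : ∀ x ∈ ball x₀ (R - c), ∫ u, φ u • γ (x - c * u) =
      (∫ u, φ u • removeKink γ J (x - c * u)) + (∫ u, φ u • max (x - c * u) 0) • J := by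
    intro x hx
    have hg_int : Integrable (fun u => φ u • removeKink γ J (x - c * u)) :=
      integrable_smul_of_support_subset hφ isCompact_Icc hsupp
        (hg.continuousOn.comp (by fun_prop) fun _ hu => sub_mul_mem_ball hc.le hx hu)
    have hramp_int : Integrable (fun u => φ u • max (x - c * u) 0) :=
      integrable_smul_of_support_subset hφ isCompact_Icc hsupp (by fun_prop)
    rw [← integral_smul_const, ← integral_add hg_int (hramp_int.smul_const J)]
    congr with u
    rw [smul_assoc, ← smul_add, removeKink_add_max_smul]
  refine ((hasDerivAt_integral_smul_comp_sub_mul_s11 hφ hsupp hc.le hcR hg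
    (ae_of_all _ fun u hu => hdiff _ (sub_mul_mem_ball hc.le (mem_ball_self (by linarith)) hu))).add
    ((hasDerivAt_integral_smul_max_sub_mul hφ hsupp hc).smul_const J)).congr_of_eventuallyEq ?_
  filter_upwards [ball_mem_nhds x₀ (sub_pos.2 hcR)] with x hx using hsplit x hx

theorem hasDerivAt_deriv_integral_smul_comp_sub_mul (hφ : Continuous φ)
    (hsupp : Function.support φ ⊆ Icc (-1) 1) (hc : 0 < c) (ht : |t| ≤ c)
    (hg : ∀ z ∈ Icc (-(4 * c)) (4 * c), DifferentiableAt ℝ (removeKink γ J) z)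
    (hg' : LipschitzOnWith M (deriv (removeKink γ J)) (Icc (-(4 * c)) (4 * c)))
    (hg'' : ∀ z ∈ Icc (-(4 * c)) (4 * c), z ≠ 0 → DifferentiableAt ℝ (deriv (removeKink γ J)) z) :
    HasDerivAt (deriv fun x => ∫ u, φ u • γ (x - c * u))
      ((∫ u, φ u • deriv (deriv (removeKink γ J)) (t - c * u)) + (c⁻¹ * φ (t / c)) • J) t := by
  set g := removeKink γ J
  have hball : ∀ x ∈ ball (0 : ℝ) (2 * c), ball x (2 * c) ⊆ Icc (-(4 * c)) (4 * c) := by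
    intro x hx
    refine (ball_subset_ball' (ε₂ := 4 * c) (y := 0) (by rw [mem_ball] at hx; linarith)).trans ?_
    rw [Real.ball_eq_Ioo, zero_sub, zero_add]
    exact Ioo_subset_Icc_self
  obtain ⟨C, hC⟩ := isCompact_Icc.exists_bound_of_continuousOn hg'.continuousOn
  have hgLip : LipschitzOnWith C.toNNReal g (Icc (-(4 * c)) (4 * c)) :=
    (convex_Icc _ _).lipschitzOnWith_of_nnnorm_hasDerivWithin_le
      (fun z hz => (hg z hz).hasDerivAt.hasDerivWithinAt) fun z hz => by
        rw [← NNReal.coe_le_coe, coe_nnnorm]; exact (hC z hz).trans (Real.le_coe_toNNReal C)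
  have ht' : t ∈ ball (0 : ℝ) (2 * c) := by
    rw [mem_ball, dist_zero_right, Real.norm_eq_abs]; linarith
  have hkink : ∀ᵐ u, u ∈ Icc (-1 : ℝ) 1 → DifferentiableAt ℝ (deriv g) (t - c * u) := by
    filter_upwards [volume.ae_ne (t / c)] with u hu hu1
    refine hg'' _ (hball t ht' (sub_mul_mem_ball hc.le (mem_ball_self (by linarith)) hu1))
      fun h => hu ?_
    rw [eq_div_iff hc.ne']; linarith
  have hd2 := (hasDerivAt_integral_smul_comp_sub_mul_s11 hφ hsupp hc.le (by linarith)
    (hg'.mono (hball t ht')) hkink).add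
    (((hasDerivAt_integral_Iio hφ (hφ.integrable_of_support_subset isCompact_Icc hsupp)
      (t / c)).comp t ((hasDerivAt_id t).div_const c)).smul_const J)
  refine (hd2.congr_deriv ?_).congr_of_eventuallyEq ?_
  · rw [one_div, mul_comm]
  · filter_upwards [isOpen_ball.mem_nhds ht'] with x hx
    exact (hasDerivAt_integral_smul_comp_sub_mul_of_removeKink hφ hsupp hc (by linarith)
      (hgLip.mono (hball x hx)) fun z hz => hg z (hball x hx hz)).deriv

theorem norm_deriv_deriv_integral_smul_comp_sub_mul_sub_le (hφ : Continuous φ)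
    (hsupp : Function.support φ ⊆ Icc (-1) 1) (hφ0 : ∀ u, 0 ≤ φ u) (hφ1 : ∫ u, φ u = 1)
    (hc : 0 < c) (ht : |t| ≤ c)
    (hg : ∀ z ∈ Icc (-(4 * c)) (4 * c), DifferentiableAt ℝ (removeKink γ J) z)
    (hg' : LipschitzOnWith M (deriv (removeKink γ J)) (Icc (-(4 * c)) (4 * c)))
    (hg'' : ∀ z ∈ Icc (-(4 * c)) (4 * c), z ≠ 0 → DifferentiableAt ℝ (deriv (removeKink γ J)) z) :
    ‖deriv (deriv fun x => ∫ u, φ u • γ (x - c * u)) t - (c⁻¹ * φ (t / c)) • J‖ ≤ M := by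
  rw [(hasDerivAt_deriv_integral_smul_comp_sub_mul hφ hsupp hc ht hg hg' hg'').deriv,
    add_sub_cancel_right]
  refine norm_integral_smul_le_of_ae_le hφ0 (hφ.integrable_of_support_subset isCompact_Icc hsupp)
    hφ1 (ae_of_all _ fun u hu => norm_deriv_le_of_lipschitzOn (Icc_mem_nhds ?_ ?_) hg')
  all_goals
    have hu1 := hsupp hu
    have := abs_le.1 ht
    nlinarith [hu1.1, hu1.2]

end Convolution

theorem mollify_eq_integral_of_abs_le {E : Type*} [NormedAddCommGroup E] [NormedSpace ℝ E]
    {φ σ : ℝ → ℝ} {γ : ℝ → E} {δ s : ℝ} (hσ : ∀ t : ℝ, |t| ≤ 1 / 4 → σ t = 1 / 100)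
    (hδ : 0 < δ) (hs : |s| ≤ δ / 4) :
    mollify φ σ δ γ s = ∫ u, φ u • γ (s - δ ^ 2 / 100 * u) := by
  have h : |s / δ| ≤ 1 / 4 := by
    rw [abs_div, abs_of_pos hδ, div_le_iff₀ hδ]; linarith
  rw [mollify, sigmaDel, hσ _ h, mul_one_div]

theorem mollify_second_deriv_concentration_general
    {E : Type*} [NormedAddCommGroup E] [NormedSpace ℝ E] [CompleteSpace E]
    (ε : ℝ) (hε1 : ε ≤ 1)
    (φ σ : ℝ → ℝ)
    (hφsm : ContDiff ℝ (⊤ : ℕ∞) φ) (hφsupp : Function.support φ ⊆ Set.Icc (-1) 1)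
    (hφ0 : ∀ t, 0 ≤ φ t) (hφint : (∫ t : ℝ, φ t) = 1)
    (hσeq : ∀ t : ℝ, |t| ≤ 1/4 → σ t = 1/100)
    (γ : ℝ → E)
    (hγm : ContDiffOn ℝ 2 γ (Set.Ioc (-(2*ε)) 0))
    (hγp : ContDiffOn ℝ 2 γ (Set.Ico 0 (2*ε)))
    (γ' : ℝ → E)
    (hγ'1 : ∀ u ∈ Set.Ioo (-(2*ε)) (2*ε), u ≠ 0 → HasDerivAt γ (γ' u) u)
    (γ'' : ℝ → E)
    (hγ''1 : ∀ u ∈ Set.Ioo (-(2*ε)) (2*ε), u ≠ 0 → HasDerivAt γ' (γ'' u) u)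
    (vp vm : E)
    (hvp : HasDerivWithinAt γ vp (Set.Ici 0) 0)
    (hvm : HasDerivWithinAt γ vm (Set.Iic 0) 0)
    (M₂ : ℝ)
    (hM₂ : M₂ = sSup ((fun u => ‖γ'' u‖) '' (Set.Ioo (-(2*ε)) (2*ε) \ {0})))
    (hM₂bd : BddAbove ((fun u => ‖γ'' u‖) '' (Set.Ioo (-(2*ε)) (2*ε) \ {0})))
    (δ : ℝ) (hδ0 : 0 < δ) (hδε : δ ≤ ε)
 :
    ∀ t : ℝ, |t| ≤ δ^2/100 →
      ‖deriv (deriv (mollify φ σ δ γ)) t -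
        ((100/δ^2) * φ (100 * t/δ^2)) • (vp - vm)‖ ≤ M₂ := by
  intro t ht
  set c := δ ^ 2 / 100 with hc_def
  set g := removeKink γ (vp - vm)
  have hc : 0 < c := by positivity
  have hcδ : c ≤ δ / 100 := by nlinarith
  have hI : Icc (-(4 * c)) (4 * c) ⊆ Ioo (-(2 * ε)) (2 * ε) :=
    Icc_subset_Ioo (by linarith) (by linarith)
  have hM : ∀ z ∈ Ioo (-(2 * ε)) (2 * ε), z ≠ 0 → ‖γ'' z‖ ≤ M₂ := fun z hz h0 =>
    hM₂ ▸ le_csSup hM₂bd ⟨z, ⟨hz, h0⟩, rfl⟩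
  have hM0 : 0 ≤ M₂ := (norm_nonneg _).trans (hM δ ⟨by linarith, by linarith⟩ hδ0.ne')
  have hg₂ : ∀ z ∈ Ioo (-(2 * ε)) (2 * ε), z ≠ 0 → HasDerivAt (deriv g) (γ'' z) z :=
    fun z hz h0 => hasDerivAt_deriv_removeKink isOpen_Ioo hγ'1 hz h0 (hγ''1 z hz h0)
  have hg₂0 : ContinuousAt (deriv g) 0 := continuousAt_deriv_removeKink_zero (by linarith)
    (by linarith) (hγm.of_le one_le_two) (hγp.of_le one_le_two) hvp hvm
  have hlip : LipschitzOnWith M₂.toNNReal (deriv g) (Icc (-(4 * c)) (4 * c)) := by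
    refine lipschitzOnWith_Icc_of_hasDerivAt_of_ne (p := 0) ⟨by linarith, by linarith⟩
      (fun z hz => ?_) (fun z hz h0 => hg₂ z (hI (Ioo_subset_Icc_self hz)) h0)
      fun z hz h0 => (hM z (hI (Ioo_subset_Icc_self hz)) h0).trans (Real.le_coe_toNNReal M₂)
    rcases eq_or_ne z 0 with rfl | h0
    exacts [hg₂0.continuousWithinAt, (hg₂ z (hI hz) h0).continuousAt.continuousWithinAt]
  have hmoll : mollify φ σ δ γ =ᶠ[𝓝 t] fun x => ∫ u, φ u • γ (x - c * u) := by
    have := abs_le.1 ht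
    filter_upwards [Ioo_mem_nhds (a := -(δ / 4)) (b := δ / 4) (by linarith) (by linarith)]
      with x hx using mollify_eq_integral_of_abs_le hσeq hδ0 (abs_le.2 ⟨hx.1.le, hx.2.le⟩)
  have hcoef : 100 / δ ^ 2 * φ (100 * t / δ ^ 2) = c⁻¹ * φ (t / c) := by
    rw [hc_def, inv_div, div_div_eq_mul_div, mul_comm t]
  rw [hmoll.deriv.deriv_eq, hcoef, ← Real.coe_toNNReal M₂ hM0]
  exact norm_deriv_deriv_integral_smul_comp_sub_mul_sub_le hφsm.continuous hφsupp hφ0 hφint hc ht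
    (fun z hz => differentiableAt_removeKink hvp hvm fun h0 => (hγ'1 z (hI hz) h0).differentiableAt)
    hlip fun z hz h0 => (hg₂ z (hI hz) h0).differentiableAt

theorem mollify_second_deriv_concentration
    {E : Type*} [NormedAddCommGroup E] [NormedSpace ℝ E] [CompleteSpace E]
    (ε : ℝ) (hε0 : 0 < ε) (hε1 : ε ≤ 1)
    (φ σ : ℝ → ℝ)
    (hφsm : ContDiff ℝ (⊤ : ℕ∞) φ) (hφsupp : Function.support φ ⊆ Set.Icc (-1) 1)
    (hφ0 : ∀ t, 0 ≤ φ t) (hφ1 : ∀ t, φ t ≤ 1) (hφint : (∫ t : ℝ, φ t) = 1)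
    (hσsm : ContDiff ℝ (⊤ : ℕ∞) σ) (hσsupp : Function.support σ ⊆ Set.Icc (-(1/2)) (1/2))
    (hσ0 : ∀ t, 0 ≤ σ t) (hσle : ∀ t, σ t ≤ 1/100)
    (hσeq : ∀ t : ℝ, |t| ≤ 1/4 → σ t = 1/100)
    (hσpos : ∀ t : ℝ, 1/4 < |t| → |t| < 1/2 → 0 < σ t)
    (γ : ℝ → E)
    (hγcont : ContinuousOn γ (Set.Ioo (-(2*ε)) (2*ε)))
    (hγm : ContDiffOn ℝ 2 γ (Set.Ioc (-(2*ε)) 0))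
    (hγp : ContDiffOn ℝ 2 γ (Set.Ico 0 (2*ε)))
    (γ' : ℝ → E)
    (hγ'1 : ∀ u ∈ Set.Ioo (-(2*ε)) (2*ε), u ≠ 0 → HasDerivAt γ (γ' u) u)
    (hγ'0 : HasDerivWithinAt γ (γ' 0) (Set.Ici 0) 0)
    (γ'' : ℝ → E)
    (hγ''1 : ∀ u ∈ Set.Ioo (-(2*ε)) (2*ε), u ≠ 0 → HasDerivAt γ' (γ'' u) u)
    (hγ''0 : HasDerivWithinAt γ' (γ'' 0) (Set.Ici 0) 0)
    (vp vm : E)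
    (hvp : HasDerivWithinAt γ vp (Set.Ici 0) 0)
    (hvm : HasDerivWithinAt γ vm (Set.Iic 0) 0)
    (M₂ : ℝ)
    (hM₂ : M₂ = sSup ((fun u => ‖γ'' u‖) '' (Set.Ioo (-(2*ε)) (2*ε) \ {0})))
    (hM₂bd : BddAbove ((fun u => ‖γ'' u‖) '' (Set.Ioo (-(2*ε)) (2*ε) \ {0})))
    (δ : ℝ) (hδ0 : 0 < δ) (hδε : δ ≤ ε)
 :
    ∀ t : ℝ, |t| ≤ δ^2/100 →
      ‖deriv (deriv (mollify φ σ δ γ)) t -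
        ((100/δ^2) * φ (100 * t/δ^2)) • (vp - vm)‖ ≤ M₂ :=
  mollify_second_deriv_concentration_general ε hε1 φ σ hφsm hφsupp hφ0 hφint hσeq γ hγm hγp γ' hγ'1
    γ'' hγ''1 vp vm hvp hvm M₂ hM₂ hM₂bd δ hδ0 hδε
end
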